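/- arXiv:2309.00814 — 3 statements merged into one kernel-verified Lean document; each statement's English description precedes it below -/
import Mathlib

section
/- Let G, H be d×d positive definite matrices, g, h ∈ R^d, and define the lifted (d+1)×(d+1) matrices 𝐆 = [[G+gg^T, g],[g^T, 1]] and 𝐇 = [[H+hh^T, h],[h^T, 1]]. Then tr(𝐇^{-1}𝐆) = tr(H^{-1}G) + ‖g−h‖²_{H^{-1}} + 1, where ‖v‖²_{H^{-1}} = v^T H^{-1} v. -/
/-!
The lift of `(A, v)` factors as `S v * diag(A, 1) * (S v)ᵀ`, where `S v = [[1, v], [0, 1]]` is a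
shear with `S v * S w = S (v + w)`. Hence `𝐇⁻¹ = (S (-h))ᵀ * diag(H⁻¹, 1) * S (-h)`, and cycling
the trace moves `S (-h)` onto `𝐆`, turning it into the lift of `(G, g - h)`. The trace of
`diag(H⁻¹, 1)` times that lift is read off blockwise: `tr (H⁻¹ G) + tr (H⁻¹ (g - h)(g - h)ᵀ) + 1`.
-/

open Matrix

namespace Matrix

variable {n R : Type*} [Fintype n] [DecidableEq n] [CommRing R]

omit [DecidableEq n] in
theorem trace_fromBlocks {m : Type*} [Fintype m] (A : Matrix n n R) (B : Matrix n m R)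
    (C : Matrix m n R) (D : Matrix m m R) :
    (fromBlocks A B C D).trace = A.trace + D.trace := by
  simp [trace, Fintype.sum_sum_type]

def shear (v : n → R) : Matrix (n ⊕ Fin 1) (n ⊕ Fin 1) R :=
  fromBlocks 1 (replicateCol (Fin 1) v) 0 1

def liftedMatrix (A : Matrix n n R) (v : n → R) : Matrix (n ⊕ Fin 1) (n ⊕ Fin 1) R :=
  fromBlocks (A + vecMulVec v v) (replicateCol (Fin 1) v) (replicateRow (Fin 1) v) 1

theorem shear_mul_shear (v w : n → R) : shear v * shear w = shear (v + w) := by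
  simp [shear, fromBlocks_multiply, replicateCol_add, add_comm]

omit [Fintype n] in
theorem shear_zero : shear (0 : n → R) = 1 := by
  simp [shear, fromBlocks_one]

theorem liftedMatrix_eq_shear_mul (A : Matrix n n R) (v : n → R) :
    liftedMatrix A v = shear v * fromBlocks A 0 0 1 * (shear v)ᵀ := by
  have hvv : vecMulVec v v = replicateCol (Fin 1) v * replicateRow (Fin 1) v := by
    ext i j
    simp [vecMulVec_apply, mul_apply]
  simp [liftedMatrix, shear, fromBlocks_transpose, fromBlocks_multiply, transpose_replicateCol,
    hvv]

theorem shear_mul_liftedMatrix_mul_transpose (A : Matrix n n R) (u v : n → R) :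
    shear u * liftedMatrix A v * (shear u)ᵀ = liftedMatrix A (u + v) := by
  rw [liftedMatrix_eq_shear_mul, liftedMatrix_eq_shear_mul, ← shear_mul_shear, transpose_mul]
  simp only [Matrix.mul_assoc]

theorem inv_liftedMatrix {A : Matrix n n R} (hA : IsUnit A.det) (v : n → R) :
    (liftedMatrix A v)⁻¹ = (shear (-v))ᵀ * fromBlocks A⁻¹ 0 0 1 * shear (-v) := by
  refine inv_eq_left_inv ?_
  have hD : fromBlocks A⁻¹ 0 0 1 * fromBlocks A 0 0 (1 : Matrix (Fin 1) (Fin 1) R) = 1 := by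
    simp [fromBlocks_multiply, nonsing_inv_mul A hA, fromBlocks_one]
  calc (shear (-v))ᵀ * fromBlocks A⁻¹ 0 0 1 * shear (-v) * liftedMatrix A v
      = (shear (-v))ᵀ * (fromBlocks A⁻¹ 0 0 1 * (shear (-v) * shear v) * fromBlocks A 0 0 1)
          * (shear v)ᵀ := by
        simp only [liftedMatrix_eq_shear_mul, Matrix.mul_assoc]
    _ = (shear v * shear (-v))ᵀ := by
        rw [shear_mul_shear, neg_add_cancel, shear_zero, Matrix.mul_one, hD, Matrix.mul_one,
          transpose_mul]
    _ = 1 := by rw [shear_mul_shear, add_neg_cancel, shear_zero, transpose_one]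

theorem trace_inv_liftedMatrix_mul {B : Matrix n n R} (hB : IsUnit B.det) (A : Matrix n n R)
    (v w : n → R) :
    ((liftedMatrix B w)⁻¹ * liftedMatrix A v).trace
      = (fromBlocks B⁻¹ 0 0 1 * liftedMatrix A (v - w)).trace := by
  set S := shear (-w)
  set D := fromBlocks B⁻¹ 0 0 (1 : Matrix (Fin 1) (Fin 1) R)
  calc ((liftedMatrix B w)⁻¹ * liftedMatrix A v).trace
      = (Sᵀ * (D * (S * liftedMatrix A v))).trace := by
        simp only [inv_liftedMatrix hB, S, D, Matrix.mul_assoc]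
    _ = (D * (S * liftedMatrix A v * Sᵀ)).trace := by
        rw [trace_mul_comm, Matrix.mul_assoc, Matrix.mul_assoc]
    _ = (D * liftedMatrix A (v - w)).trace := by
        rw [shear_mul_liftedMatrix_mul_transpose, neg_add_eq_sub]

theorem trace_fromBlocks_mul_liftedMatrix (M A : Matrix n n R) (v : n → R) :
    (fromBlocks M 0 0 1 * liftedMatrix A v).trace = (M * A).trace + v ⬝ᵥ (M *ᵥ v) + 1 := by
  simp only [liftedMatrix, fromBlocks_multiply, Matrix.zero_mul, add_zero, Matrix.one_mul,
    Matrix.mul_one, trace_fromBlocks, mul_add, trace_add, mul_vecMulVec, trace_vecMulVec,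
    zero_add, trace_one, Fintype.card_fin, Nat.cast_one, dotProduct_comm v]

end Matrix

theorem lifted_trace_identity_general {d : ℕ} (G H : Matrix (Fin d) (Fin d) ℝ)
    (g h : Fin d → ℝ) (hH : H.PosDef) :
    ((fromBlocks (H + vecMulVec h h) (replicateCol (Fin 1) h) (replicateRow (Fin 1) h) 1)⁻¹ *
      (fromBlocks (G + vecMulVec g g) (replicateCol (Fin 1) g) (replicateRow (Fin 1) g) 1)).trace
    = (H⁻¹ * G).trace + (g - h) ⬝ᵥ (H⁻¹ *ᵥ (g - h)) + 1 := by
  have hH_det : IsUnit H.det := (isUnit_iff_isUnit_det H).1 hH.isUnit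
  exact (trace_inv_liftedMatrix_mul hH_det G g h).trans (trace_fromBlocks_mul_liftedMatrix _ _ _)

theorem lifted_trace_identity {d : ℕ} (G H : Matrix (Fin d) (Fin d) ℝ)
    (g h : Fin d → ℝ) (hG : G.PosDef) (hH : H.PosDef) :
    ((fromBlocks (H + vecMulVec h h) (replicateCol (Fin 1) h) (replicateRow (Fin 1) h) 1)⁻¹ *
      (fromBlocks (G + vecMulVec g g) (replicateCol (Fin 1) g) (replicateRow (Fin 1) g) 1)).trace
    = (H⁻¹ * G).trace + (g - h) ⬝ᵥ (H⁻¹ *ᵥ (g - h)) + 1 :=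
  lifted_trace_identity_general G H g h hH
end

section
/- Let G, H be d×d positive definite matrices, g, h ∈ R^d, β > 0, and let 𝐆 = [[G+gg^T, g],[g^T, 1]], 𝐇' = [[H+hh^T, h],[h^T, 1+β]]. Then tr((𝐇')^{-1}𝐆) ≥ (1/(2(1 + (β/(1+β))‖h‖²_{H^{-1}}))) ‖g−h‖²_{H^{-1}} − (β/(1+β))² ‖h‖²_{H^{-1}}. -/
/-!
Write `𝐆 = diag(G, 0) + v vᵀ` with `v = (g, 1)`. As `𝐇'⁻¹` and `diag(G, 0)` are positive
semidefinite, `tr(𝐇'⁻¹ 𝐆) ≥ vᵀ 𝐇'⁻¹ v`, and `vᵀ 𝐇'⁻¹ v ≥ 2 vᵀw - wᵀ 𝐇' w` for every `w`.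
Optimising the last coordinate of `w = (y, t)` leaves `2 xᵀy - yᵀ (H + μ h hᵀ) y + 1 - μ`, where
`μ = β / (1 + β)` and `x = g - h + μ h`. By Cauchy–Schwarz `h hᵀ ≤ ‖h‖²_{H⁻¹} H`, so
`y = H⁻¹ x / (1 + μ ‖h‖²_{H⁻¹})` gives at least `‖x‖²_{H⁻¹} / (1 + μ ‖h‖²_{H⁻¹})`; it remains to
use `‖g - h‖² ≤ 2 ‖x‖² + 2 μ² ‖h‖²` in the `H⁻¹`-norm.
-/

open Matrix

namespace Matrix

variable {m n : Type*} [Fintype m] [Fintype n]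

lemma IsSymm.dotProduct_mulVec_comm {R : Type*} [CommSemiring R] {M : Matrix n n R}
    (hM : M.IsSymm) (x y : n → R) :
    x ⬝ᵥ M *ᵥ y = y ⬝ᵥ M *ᵥ x := by
  rw [dotProduct_mulVec, ← mulVec_transpose, hM.eq, dotProduct_comm]

omit [Fintype n] in
lemma PosSemidef.isSymm {M : Matrix n n ℝ} (hM : M.PosSemidef) : M.IsSymm :=
  isHermitian_iff_isSymm.mp hM.isHermitian

lemma PosSemidef.dotProduct_mulVec_le {M : Matrix n n ℝ} (hM : M.PosSemidef) (a b : n → ℝ) :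
    a ⬝ᵥ M *ᵥ a ≤ 2 * ((a + b) ⬝ᵥ M *ᵥ (a + b)) + 2 * (b ⬝ᵥ M *ᵥ b) := by
  have h := hM.dotProduct_mulVec_nonneg (a + (2 : ℝ) • b)
  simp only [star_trivial, mulVec_add, mulVec_smul, dotProduct_add, add_dotProduct,
    dotProduct_smul, smul_dotProduct, smul_eq_mul] at h ⊢
  rw [hM.isSymm.dotProduct_mulVec_comm b a] at h ⊢
  linarith

lemma mulVec_inv_mulVec {R : Type*} [CommRing R] [DecidableEq n] {M : Matrix n n R} (hM : IsUnit M)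
    (v : n → R) :
    M *ᵥ M⁻¹ *ᵥ v = v := by
  rw [mulVec_mulVec, mul_nonsing_inv _ ((isUnit_iff_isUnit_det M).mp hM), one_mulVec]

lemma PosDef.two_mul_dotProduct_sub_le [DecidableEq n] {M : Matrix n n ℝ} (hM : M.PosDef)
    (v w : n → ℝ) : 2 * (v ⬝ᵥ w) - w ⬝ᵥ M *ᵥ w ≤ v ⬝ᵥ M⁻¹ *ᵥ v := by
  have hz := mulVec_inv_mulVec hM.isUnit v
  have h := hM.posSemidef.dotProduct_mulVec_nonneg (w - M⁻¹ *ᵥ v)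
  simp only [star_trivial, mulVec_sub, dotProduct_sub, sub_dotProduct] at h
  rw [hM.posSemidef.isSymm.dotProduct_mulVec_comm (M⁻¹ *ᵥ v) w, hz, dotProduct_comm (M⁻¹ *ᵥ v),
    dotProduct_comm w v] at h
  linarith

lemma PosDef.dotProduct_sq_le [DecidableEq n] {M : Matrix n n ℝ} (hM : M.PosDef) (v w : n → ℝ) :
    (v ⬝ᵥ w) ^ 2 ≤ (v ⬝ᵥ M⁻¹ *ᵥ v) * (w ⬝ᵥ M *ᵥ w) := by
  have h : ∀ τ : ℝ, 0 ≤ (w ⬝ᵥ M *ᵥ w) * (τ * τ) + (-2 * (v ⬝ᵥ w)) * τ + v ⬝ᵥ M⁻¹ *ᵥ v := by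
    intro τ
    have := hM.two_mul_dotProduct_sub_le v (τ • w)
    simp only [mulVec_smul, dotProduct_smul, smul_dotProduct, smul_eq_mul] at this
    linarith
  have := discrim_le_zero h
  rw [discrim] at this
  linarith

lemma PosDef.exists_div_le_two_mul_dotProduct_sub [DecidableEq n] {H : Matrix n n ℝ}
    (hH : H.PosDef) {μ : ℝ} (hμ : 0 ≤ μ) (x h : n → ℝ) :
    ∃ y, (x ⬝ᵥ H⁻¹ *ᵥ x) / (1 + μ * (h ⬝ᵥ H⁻¹ *ᵥ h)) ≤
      2 * (x ⬝ᵥ y) - y ⬝ᵥ H *ᵥ y - μ * (h ⬝ᵥ y) ^ 2 := by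
  set c := 1 + μ * (h ⬝ᵥ H⁻¹ *ᵥ h)
  have hc : 0 < c := by
    have := hH.inv.posSemidef.dotProduct_mulVec_nonneg h
    simp only [star_trivial] at this
    positivity
  refine ⟨c⁻¹ • H⁻¹ *ᵥ x, ?_⟩
  have hCS := mul_le_mul_of_nonneg_left (hH.dotProduct_sq_le h (c⁻¹ • H⁻¹ *ᵥ x)) hμ
  have hQ : (H⁻¹ *ᵥ x) ⬝ᵥ H *ᵥ H⁻¹ *ᵥ x = x ⬝ᵥ H⁻¹ *ᵥ x := by
    rw [mulVec_inv_mulVec hH.isUnit x, dotProduct_comm]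
  simp only [mulVec_smul, dotProduct_smul, smul_dotProduct, smul_eq_mul, hQ] at hCS ⊢
  have hc_eq : (x ⬝ᵥ H⁻¹ *ᵥ x) / c = 2 * (c⁻¹ * (x ⬝ᵥ H⁻¹ *ᵥ x)) - c⁻¹ * (c⁻¹ * (x ⬝ᵥ H⁻¹ *ᵥ x))
      - μ * ((h ⬝ᵥ H⁻¹ *ᵥ h) * (c⁻¹ * (c⁻¹ * (x ⬝ᵥ H⁻¹ *ᵥ x)))) := by
    field_simp
    ring
  linarith

omit [Fintype m] in
lemma fromBlocks_replicateCol_replicateRow (A : Matrix m m ℝ) (D : Matrix (Fin 1) (Fin 1) ℝ)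
    (a : m → ℝ) :
    fromBlocks (A + vecMulVec a a) (replicateCol (Fin 1) a) (replicateRow (Fin 1) a) (D + 1) =
      fromBlocks A 0 0 D + vecMulVec (Sum.elim a 1) (Sum.elim a 1) := by
  ext (i | i) (j | j) <;> simp [vecMulVec_apply, Fin.fin_one_eq_zero]

lemma sumElim_dotProduct_fromBlocks_mulVec (A : Matrix m m ℝ) (D : Matrix n n ℝ)
    (x : m → ℝ) (z : n → ℝ) :
    Sum.elim x z ⬝ᵥ fromBlocks A 0 0 D *ᵥ Sum.elim x z = x ⬝ᵥ A *ᵥ x + z ⬝ᵥ D *ᵥ z := by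
  simp [fromBlocks_mulVec, sumElim_dotProduct_sumElim]

lemma PosSemidef.fromBlocks_zero {A : Matrix m m ℝ} {D : Matrix n n ℝ} (hA : A.PosSemidef)
    (hD : D.PosSemidef) : (fromBlocks A 0 0 D).PosSemidef := by
  refine .of_dotProduct_mulVec_nonneg (hA.isHermitian.fromBlocks (by simp) hD.isHermitian)
    fun x => ?_
  rw [star_trivial, ← Sum.elim_comp_inl_inr x, sumElim_dotProduct_fromBlocks_mulVec]
  exact add_nonneg (by simpa using hA.dotProduct_mulVec_nonneg _)
    (by simpa using hD.dotProduct_mulVec_nonneg _)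

lemma PosDef.fromBlocks_zero {A : Matrix m m ℝ} {D : Matrix n n ℝ} (hA : A.PosDef)
    (hD : D.PosDef) : (fromBlocks A 0 0 D).PosDef := by
  refine .of_dotProduct_mulVec_pos (hA.isHermitian.fromBlocks (by simp) hD.isHermitian)
    fun x hx => ?_
  rw [star_trivial, ← Sum.elim_comp_inl_inr x, sumElim_dotProduct_fromBlocks_mulVec]
  obtain hl | hr : x ∘ Sum.inl ≠ 0 ∨ x ∘ Sum.inr ≠ 0 := by
    by_contra! h
    exact hx (by rw [← Sum.elim_comp_inl_inr x, h.1, h.2, Sum.elim_zero_zero])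
  · exact add_pos_of_pos_of_nonneg (by simpa using hA.dotProduct_mulVec_pos hl)
      (by simpa using hD.posSemidef.dotProduct_mulVec_nonneg _)
  · exact add_pos_of_nonneg_of_pos (by simpa using hA.posSemidef.dotProduct_mulVec_nonneg _)
      (by simpa using hD.dotProduct_mulVec_pos hr)

open scoped MatrixOrder in
lemma PosSemidef.trace_mul_nonneg {A B : Matrix n n ℝ} (hA : A.PosSemidef) (hB : B.PosSemidef) :
    0 ≤ (A * B).trace := by
  classical
  obtain ⟨C, rfl⟩ := CStarAlgebra.nonneg_iff_eq_star_mul_self.mp hA.nonneg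
  rw [Matrix.mul_assoc, trace_mul_comm, Matrix.mul_assoc, ← Matrix.mul_assoc]
  exact (hB.mul_mul_conjTranspose_same C).trace_nonneg

lemma PosSemidef.dotProduct_mulVec_le_trace_mul_add {A B : Matrix n n ℝ} (hA : A.PosSemidef)
    (hB : B.PosSemidef) (v : n → ℝ) : v ⬝ᵥ A *ᵥ v ≤ (A * (B + vecMulVec v v)).trace := by
  rw [Matrix.mul_add, trace_add, mul_vecMulVec, trace_vecMulVec, dotProduct_comm]
  exact le_add_of_nonneg_left (hA.trace_mul_nonneg hB)

lemma dotProduct_add_vecMulVec_self_mulVec (M : Matrix n n ℝ) (u w : n → ℝ) :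
    w ⬝ᵥ (M + vecMulVec u u) *ᵥ w = w ⬝ᵥ M *ᵥ w + (u ⬝ᵥ w) ^ 2 := by
  rw [add_mulVec, dotProduct_add, vecMulVec_mulVec, op_smul_eq_smul, dotProduct_smul, smul_eq_mul,
    dotProduct_comm w u, sq]

lemma two_mul_dotProduct_sub_le_trace_fromBlocks_inv_mul [DecidableEq m]
    {G H : Matrix m m ℝ} (hG : G.PosSemidef) (hH : H.PosDef) (g h y : m → ℝ) {β : ℝ} (hβ : 0 < β) :
    2 * ((g - h + (β / (1 + β)) • h) ⬝ᵥ y) - y ⬝ᵥ H *ᵥ y - β / (1 + β) * (h ⬝ᵥ y) ^ 2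
        + (1 - β / (1 + β)) ≤
      ((fromBlocks (H + vecMulVec h h) (replicateCol (Fin 1) h) (replicateRow (Fin 1) h)
        ((1 + β) • (1 : Matrix (Fin 1) (Fin 1) ℝ)))⁻¹ *
      (fromBlocks (G + vecMulVec g g) (replicateCol (Fin 1) g) (replicateRow (Fin 1) g) 1)).trace := by
  have hG' : fromBlocks (G + vecMulVec g g) (replicateCol (Fin 1) g) (replicateRow (Fin 1) g) 1 =
      fromBlocks G 0 0 0 + vecMulVec (Sum.elim g 1) (Sum.elim g 1) := by
    simpa using fromBlocks_replicateCol_replicateRow G 0 g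
  have hH' : fromBlocks (H + vecMulVec h h) (replicateCol (Fin 1) h) (replicateRow (Fin 1) h)
      ((1 + β) • (1 : Matrix (Fin 1) (Fin 1) ℝ)) =
      fromBlocks H 0 0 (β • 1) + vecMulVec (Sum.elim h 1) (Sum.elim h 1) := by
    rw [add_smul, one_smul, add_comm (1 : Matrix (Fin 1) (Fin 1) ℝ)]
    exact fromBlocks_replicateCol_replicateRow H _ h
  rw [hG', hH']
  set L := fromBlocks H 0 0 (β • (1 : Matrix (Fin 1) (Fin 1) ℝ)) +
    vecMulVec (Sum.elim h 1) (Sum.elim h 1)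
  have hL : L.PosDef := (hH.fromBlocks_zero (PosDef.one.smul hβ)).add_posSemidef
    (by simpa using posSemidef_vecMulVec_self_star (Sum.elim h 1))
  set v : m ⊕ Fin 1 → ℝ := Sum.elim g 1
  set w : m ⊕ Fin 1 → ℝ := Sum.elim y ![(1 - h ⬝ᵥ y) / (1 + β)]
  have hw : 2 * (v ⬝ᵥ w) - w ⬝ᵥ L *ᵥ w = 2 * ((g - h + (β / (1 + β)) • h) ⬝ᵥ y)
      - y ⬝ᵥ H *ᵥ y - β / (1 + β) * (h ⬝ᵥ y) ^ 2 + (1 - β / (1 + β)) := by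
    simp only [L, v, w, dotProduct_add_vecMulVec_self_mulVec, sumElim_dotProduct_fromBlocks_mulVec,
      sumElim_dotProduct_sumElim, add_dotProduct, sub_dotProduct, smul_dotProduct, smul_eq_mul,
      one_dotProduct, Finset.univ_unique, Fin.default_eq_zero, Finset.sum_singleton,
      cons_val_fin_one, smul_mulVec, one_mulVec, smul_cons, smul_empty, dotProduct_cons, head_cons,
      tail_cons, dotProduct_of_isEmpty, add_zero]
    field_simp
    ring
  calc _ = 2 * (v ⬝ᵥ w) - w ⬝ᵥ L *ᵥ w := hw.symm
    _ ≤ v ⬝ᵥ L⁻¹ *ᵥ v := hL.two_mul_dotProduct_sub_le v w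
    _ ≤ _ := hL.inv.posSemidef.dotProduct_mulVec_le_trace_mul_add
          (hG.fromBlocks_zero PosSemidef.zero) v

end Matrix

theorem lifted_trace_lower_bound {d : ℕ} (G H : Matrix (Fin d) (Fin d) ℝ)
    (g h : Fin d → ℝ) (β : ℝ) (hG : G.PosDef) (hH : H.PosDef) (hβ : 0 < β) :
    ((fromBlocks (H + vecMulVec h h) (replicateCol (Fin 1) h) (replicateRow (Fin 1) h)
        ((1 + β) • (1 : Matrix (Fin 1) (Fin 1) ℝ)))⁻¹ *
      (fromBlocks (G + vecMulVec g g) (replicateCol (Fin 1) g) (replicateRow (Fin 1) g) 1)).trace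
    ≥ (1 / (2 * (1 + (β / (1 + β)) * (h ⬝ᵥ (H⁻¹ *ᵥ h))))) *
        ((g - h) ⬝ᵥ (H⁻¹ *ᵥ (g - h)))
      - (β / (1 + β)) ^ 2 * (h ⬝ᵥ (H⁻¹ *ᵥ h)) := by
  set μ := β / (1 + β)
  have hμ0 : 0 ≤ μ := by positivity
  have hμ1 : μ ≤ 1 := (div_le_one (by positivity)).mpr (by linarith)
  set s := h ⬝ᵥ H⁻¹ *ᵥ h
  have hs : 0 ≤ s := by simpa using hH.inv.posSemidef.dotProduct_mulVec_nonneg h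
  have hc : 1 ≤ 1 + μ * s := le_add_of_nonneg_right (mul_nonneg hμ0 hs)
  obtain ⟨y, hy⟩ := hH.exists_div_le_two_mul_dotProduct_sub hμ0 (g - h + μ • h) h
  have hA := hH.inv.posSemidef.dotProduct_mulVec_le (g - h) (μ • h)
  simp only [mulVec_smul, dotProduct_smul, smul_dotProduct, smul_eq_mul] at hA
  rw [ge_iff_le]
  calc _ = (((g - h) ⬝ᵥ H⁻¹ *ᵥ (g - h)) / 2 - μ ^ 2 * s) / (1 + μ * s)
          + (μ ^ 2 * s / (1 + μ * s) - μ ^ 2 * s) := by field_simp; ring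
    _ ≤ ((g - h + μ • h) ⬝ᵥ H⁻¹ *ᵥ (g - h + μ • h)) / (1 + μ * s) + (1 - μ) := by
        refine add_le_add (by gcongr; linarith) ?_
        linarith [div_le_self (by positivity : 0 ≤ μ ^ 2 * s) hc]
    _ ≤ _ := by linarith [hy]
    _ ≤ _ := two_mul_dotProduct_sub_le_trace_fromBlocks_inv_mul hG.posSemidef hH g h y hβ
end

section
/- Let μ be a probability measure on R^d supported on the unit ball, x = E_{a∼μ}[a], and V an orthogonal d×d matrix. For each k, h ∈ [d], define λ_{kh} = E_{a∼μ}[e_k^T V^T (a−x)(a−x)^T V e_h]. Then Σ_{k=1}^d λ_{kh}² ≤ λ_{hh} for every h. -/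
open Matrix MeasureTheory

lemma sq_integral_mul_le {α : Type*} [MeasurableSpace α] (μ : Measure α) (f g : α → ℝ)
    (hf : Integrable (fun a => f a ^ 2) μ) (hg : Integrable (fun a => g a ^ 2) μ)
    (hfg : Integrable (fun a => f a * g a) μ) :
    (∫ a, f a * g a ∂μ) ^ 2 ≤ (∫ a, f a ^ 2 ∂μ) * ∫ a, g a ^ 2 ∂μ := by
  set A := ∫ a, f a ^ 2 ∂μ
  set B := ∫ a, g a ^ 2 ∂μ
  set C := ∫ a, f a * g a ∂μ
  have key : ∀ t : ℝ, 0 ≤ B * (t * t) + (2 * C) * t + A := by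
    intro t
    have hrw : (fun a => (f a + t * g a) ^ 2)
        = fun a => f a ^ 2 + (2 * t) * (f a * g a) + t ^ 2 * g a ^ 2 := by
      ext a; ring
    have hint1 : Integrable (fun a => f a ^ 2 + (2 * t) * (f a * g a)) μ :=
      hf.add (hfg.const_mul _)
    have h0 : (0:ℝ) ≤ ∫ a, (f a + t * g a) ^ 2 ∂μ := integral_nonneg fun a => sq_nonneg _
    rw [hrw] at h0
    rw [integral_add hint1 (hg.const_mul _), integral_add hf (hfg.const_mul _),
      integral_const_mul, integral_const_mul] at h0
    nlinarith [h0]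
  have hd := discrim_le_zero key
  rw [discrim] at hd
  nlinarith [hd]

lemma integrable_of_cont {d : ℕ} (μ : Measure (Fin d → ℝ)) [IsProbabilityMeasure μ]
    (hb : ∀ᵐ a ∂μ, ‖a‖ ≤ 1) (f : (Fin d → ℝ) → ℝ) (hf : Continuous f) :
    Integrable f μ := by
  obtain ⟨C, hC⟩ := (isCompact_closedBall (0 : Fin d → ℝ) 1).exists_bound_of_continuousOn
    hf.continuousOn
  refine Integrable.mono' (integrable_const C) hf.aestronglyMeasurable ?_
  filter_upwards [hb] with a ha
  exact hC a (by simpa [Metric.mem_closedBall, dist_zero_right] using ha)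

theorem sum_sq_lambda_le_lambda_diag {d : ℕ} (μ : Measure (Fin d → ℝ))
    [IsProbabilityMeasure μ] (hsupp : ∀ᵐ a ∂μ, a ⬝ᵥ a ≤ 1)
    (V : Matrix (Fin d) (Fin d) ℝ) (hV : Vᵀ * V = 1) :
    ∀ h : Fin d,
      ∑ k : Fin d,
        (∫ a, ((Vᵀ *ᵥ (a - ∫ b, b ∂μ)) k) * ((Vᵀ *ᵥ (a - ∫ b, b ∂μ)) h) ∂μ) ^ 2
      ≤ ∫ a, ((Vᵀ *ᵥ (a - ∫ b, b ∂μ)) h) ^ 2 ∂μ := by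
  intro h
  -- a.e. norm bound
  have hnorm : ∀ᵐ a ∂μ, ‖a‖ ≤ 1 := by
    filter_upwards [hsupp] with a ha
    rw [pi_norm_le_iff_of_nonneg zero_le_one]
    intro i
    have h1 : a i * a i ≤ a ⬝ᵥ a := by
      have := Finset.single_le_sum (f := fun j => a j * a j)
        (fun j _ => mul_self_nonneg (a j)) (Finset.mem_univ i)
      simpa [dotProduct] using this
    have : a i * a i ≤ 1 := h1.trans ha
    rw [Real.norm_eq_abs]
    nlinarith [abs_nonneg (a i), sq_abs (a i)]
  have hcont : ∀ f : (Fin d → ℝ) → ℝ, Continuous f → Integrable f μ :=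
    fun f hf => integrable_of_cont μ hnorm f hf
  set x : Fin d → ℝ := ∫ b, b ∂μ with hxdef
  set y : (Fin d → ℝ) → Fin d → ℝ := fun a => Vᵀ *ᵥ (a - x) with hydef
  have hycont : ∀ k, Continuous fun a => y a k := by
    intro k
    simp only [hydef, mulVec, dotProduct]
    fun_prop
  -- integrability of id
  have hid : Integrable (fun a : Fin d → ℝ => a) μ := by
    refine Integrable.mono' (integrable_const (1:ℝ)) measurable_id.aestronglyMeasurable ?_
    simpa using hnorm
  have hxi : ∀ i, x i = ∫ a, a i ∂μ := by
    intro i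
    have := (ContinuousLinearMap.proj (R := ℝ) (φ := fun _ : Fin d => ℝ) i).integral_comp_comm hid
    simpa [hxdef] using this.symm
  set m : Fin d → ℝ := fun k => ∫ a, y a k * y a h ∂μ with hmdef
  set w : Fin d → ℝ := V *ᵥ m with hwdef
  set L : ℝ := ∑ k, m k ^ 2 with hLdef
  have hww : w ⬝ᵥ w = L := by
    have h1 : w ⬝ᵥ w = m ⬝ᵥ m := by
      calc w ⬝ᵥ w = (w ᵥ* V) ⬝ᵥ m := by rw [hwdef, dotProduct_mulVec]
        _ = (Vᵀ *ᵥ w) ⬝ᵥ m := by rw [mulVec_transpose]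
        _ = ((Vᵀ * V) *ᵥ m) ⬝ᵥ m := by rw [hwdef, mulVec_mulVec]
        _ = m ⬝ᵥ m := by rw [hV, one_mulVec]
    rw [h1, hLdef]
    simp [dotProduct, sq]
  have hS : ∀ a : Fin d → ℝ, (∑ k, m k * y a k) = w ⬝ᵥ (a - x) := by
    intro a
    have : m ⬝ᵥ (Vᵀ *ᵥ (a - x)) = (m ᵥ* Vᵀ) ⬝ᵥ (a - x) := dotProduct_mulVec m Vᵀ (a - x)
    rw [hydef] at *
    simpa [hwdef, vecMul_transpose, dotProduct] using this
  -- integrability facts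
  have hyy : ∀ k l, Integrable (fun a => y a k * y a l) μ :=
    fun k l => hcont _ (by exact (hycont k).mul (hycont l))
  have hy2 : Integrable (fun a => y a h ^ 2) μ := by
    simpa [sq] using hyy h h
  have hwa_cont : Continuous fun a : Fin d → ℝ => w ⬝ᵥ (a - x) := by
    simp only [dotProduct]
    fun_prop
  -- Claim 1 : L = ∫ S * y_h
  have claim1 : L = ∫ a, (w ⬝ᵥ (a - x)) * y a h ∂μ := by
    have : ∀ a : Fin d → ℝ, (w ⬝ᵥ (a - x)) * y a h = ∑ k, m k * (y a k * y a h) := by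
      intro a
      rw [← hS a, Finset.sum_mul]
      congr 1; ext k; ring
    simp_rw [this]
    rw [integral_finset_sum _ (fun k _ => (hyy k h).const_mul (m k))]
    simp_rw [integral_const_mul]
    rw [hLdef, hmdef]
    congr 1; ext k; rw [sq]
  -- Claim 2 : ∫ S^2 ≤ L
  have claim2 : (∫ a, (w ⬝ᵥ (a - x)) ^ 2 ∂μ) ≤ L := by
    have hmean : ∫ a, w ⬝ᵥ a ∂μ = w ⬝ᵥ x := by
      have : ∀ a : Fin d → ℝ, w ⬝ᵥ a = ∑ i, w i * a i := fun a => rfl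
      simp_rw [this]
      rw [integral_finset_sum _ (fun i _ => (hcont _ (by fun_prop)))]
      simp only [integral_const_mul, dotProduct]
      exact Finset.sum_congr rfl fun i _ => by rw [hxi i]
    have hexp : ∀ a : Fin d → ℝ, (w ⬝ᵥ (a - x)) ^ 2
        = (w ⬝ᵥ a) ^ 2 - 2 * (w ⬝ᵥ x) * (w ⬝ᵥ a) + (w ⬝ᵥ x) ^ 2 := by
      intro a
      rw [dotProduct_sub]
      ring
    have hwa2 : Integrable (fun a => (w ⬝ᵥ a) ^ 2) μ :=
      hcont _ (by simp only [dotProduct]; fun_prop)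
    have hwa1 : Integrable (fun a => w ⬝ᵥ a) μ :=
      hcont _ (by simp only [dotProduct]; fun_prop)
    have e1 : Integrable (fun a => (w ⬝ᵥ a) ^ 2 - 2 * (w ⬝ᵥ x) * (w ⬝ᵥ a)) μ :=
      hcont _ (by simp only [dotProduct]; fun_prop)
    have hintS2 : ∫ a, (w ⬝ᵥ (a - x)) ^ 2 ∂μ
        = (∫ a, (w ⬝ᵥ a) ^ 2 ∂μ) - (w ⬝ᵥ x) ^ 2 := by
      simp_rw [hexp]
      rw [integral_add e1 (integrable_const _),
        integral_sub hwa2 (hwa1.const_mul _), integral_const_mul, hmean]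
      simp [measure_univ]
      ring
    have hbound : ∫ a, (w ⬝ᵥ a) ^ 2 ∂μ ≤ L := by
      have hle : ∀ᵐ a ∂μ, (w ⬝ᵥ a) ^ 2 ≤ L := by
        filter_upwards [hsupp] with a ha
        have hcs := Finset.sum_mul_sq_le_sq_mul_sq Finset.univ w a
        have hw2 : (∑ i, w i ^ 2) = L := by rw [← hww]; simp [dotProduct, sq]
        have ha2 : (∑ i, a i ^ 2) ≤ 1 := by simpa [dotProduct, sq] using ha
        have hwnn : (0:ℝ) ≤ ∑ i, w i ^ 2 := Finset.sum_nonneg fun i _ => sq_nonneg _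
        calc (w ⬝ᵥ a) ^ 2 = (∑ i, w i * a i) ^ 2 := rfl
          _ ≤ (∑ i, w i ^ 2) * ∑ i, a i ^ 2 := hcs
          _ ≤ (∑ i, w i ^ 2) * 1 := by
              exact mul_le_mul_of_nonneg_left ha2 hwnn
          _ = L := by rw [mul_one, hw2]
      calc ∫ a, (w ⬝ᵥ a) ^ 2 ∂μ ≤ ∫ _, L ∂μ := integral_mono_ae hwa2 (integrable_const _) hle
        _ = L := by simp [measure_univ]
    rw [hintS2]
    nlinarith [sq_nonneg (w ⬝ᵥ x)]
  -- Cauchy-Schwarz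
  have hS2 : Integrable (fun a => (w ⬝ᵥ (a - x)) ^ 2) μ := hcont _ (by fun_prop)

  have hSyh : Integrable (fun a => (w ⬝ᵥ (a - x)) * y a h) μ :=
    hcont _ (hwa_cont.mul (hycont h))
  have hcs := sq_integral_mul_le μ (fun a => w ⬝ᵥ (a - x)) (fun a => y a h) hS2 hy2 hSyh
  have hT : (0:ℝ) ≤ ∫ a, y a h ^ 2 ∂μ := integral_nonneg fun a => sq_nonneg _
  have hLnn : (0:ℝ) ≤ L := Finset.sum_nonneg fun k _ => sq_nonneg _
  have hgoal : L ≤ ∫ a, y a h ^ 2 ∂μ := by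
    rw [← claim1] at hcs
    rcases eq_or_lt_of_le hLnn with hL0 | hLpos
    · rw [← hL0]; exact hT
    · nlinarith [hcs, claim2, mul_le_mul_of_nonneg_right claim2 hT]
  exact hgoal
end
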